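/- arXiv:2005.14094 — 5 statements merged into one kernel-verified Lean document; each statement's English description precedes it below -/
import Mathlib

section
/- In the 3x3 extended Battle-of-the-Sexes game \hat G with player 1 strategies {t,b,x} and player 2 strategies {l,r,y}, payoffs: (t,l)=(3,2), (t,r)=(0,0), (t,y)=(0,1), (b,l)=(0,0), (b,r)=(2,3), (b,y)=(-2,4), (x,l)=(1,0), (x,r)=(4,-2), (x,y)=(-1,-1), the pure profile (t,l) is the unique Nash equilibrium (in mixed strategies). -/
open Finset

/-- Player 1's payoff matrix of the extended Battle-of-the-Sexes game `Ĝ`: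
rows are `t, b, x`, columns are `l, r, y`. -/
noncomputable def GhatA : Fin 3 → Fin 3 → ℝ := ![![3, 0, 0], ![0, 2, -2], ![1, 4, -1]]

/-- Player 2's payoff matrix. -/
noncomputable def GhatB : Fin 3 → Fin 3 → ℝ := ![![2, 0, 1], ![0, 3, 4], ![0, -2, -1]]

/-- `σ` is a mixed strategy over three pure strategies. -/
def IsMixed3 (σ : Fin 3 → ℝ) : Prop := (∀ i, 0 ≤ σ i) ∧ ∑ i, σ i = 1

/-- Expected payoff in a 3×3 bimatrix game. -/
noncomputable def pay3 (M : Fin 3 → Fin 3 → ℝ) (σ τ : Fin 3 → ℝ) : ℝ :=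
  ∑ i, ∑ j, σ i * τ j * M i j

/-- `(σ, τ)` is a (mixed) Nash equilibrium of `Ĝ`. -/
def IsNashGhat (σ τ : Fin 3 → ℝ) : Prop :=
  IsMixed3 σ ∧ IsMixed3 τ ∧
  (∀ σ', IsMixed3 σ' → pay3 GhatA σ' τ ≤ pay3 GhatA σ τ) ∧
  (∀ τ', IsMixed3 τ' → pay3 GhatB σ τ' ≤ pay3 GhatB σ τ)

/-- The pure strategy `t` (resp. `l`), as a mixed strategy. -/
noncomputable def pure0 : Fin 3 → ℝ := fun i => if i = 0 then 1 else 0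

/-! Iterated elimination of strictly dominated strategies: whatever player 2 plays, `x` earns
player 1 strictly more than `b`, and `y` earns player 2 strictly more than `r`. With `b` and `r`
gone, `t` strictly beats `x`, and then against `t` the column `l` strictly beats `y`. A strategy
strictly worse than another pure strategy against the opponent's mix carries no weight in a best
response, so only `(t, l)` survives, and it is indeed an equilibrium. -/

open Matrix

section BestResponse

variable {ι : Type*} [Fintype ι]

/-- `σ` is a best response, among mixed strategies, to the vector `u` of pure-strategy payoffs. -/
def IsBestResponse (u σ : ι → ℝ) : Prop :=
  σ ∈ stdSimplex ℝ ι ∧ ∀ σ' ∈ stdSimplex ℝ ι, σ' ⬝ᵥ u ≤ σ ⬝ᵥ u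

theorem dotProduct_le_of_mem_stdSimplex {σ u : ι → ℝ} {c : ℝ} (hσ : σ ∈ stdSimplex ℝ ι)
    (hu : ∀ k, u k ≤ c) : σ ⬝ᵥ u ≤ c :=
  calc σ ⬝ᵥ u = ∑ k, σ k * u k := rfl
    _ ≤ ∑ k, σ k * c := by gcongr with k; exacts [hσ.1 k, hu k]
    _ = c := by rw [← Finset.sum_mul, hσ.2, one_mul]

theorem isBestResponse_single [DecidableEq ι] {u : ι → ℝ} {i : ι} (hi : ∀ k, u k ≤ u i) :
    IsBestResponse u (Pi.single i 1) :=
  ⟨single_mem_stdSimplex ℝ i, fun _ hσ' => by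
    simpa [single_dotProduct] using dotProduct_le_of_mem_stdSimplex hσ' hi⟩

/-- Moving the weight of `i` onto a strictly better pure strategy `k` would raise the payoff. -/
theorem IsBestResponse.apply_eq_zero_of_lt {u σ : ι → ℝ} (h : IsBestResponse u σ) {i k : ι}
    (hlt : u i < u k) : σ i = 0 := by
  classical
  have hik : i ≠ k := fun hik => (hik ▸ hlt).false
  set σ' := σ + σ i • (Pi.single k 1 - Pi.single i 1)
  have hσ' : σ' ∈ stdSimplex ℝ ι := by
    refine ⟨fun j => ?_, ?_⟩
    · obtain rfl | hji := eq_or_ne j i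
      · simp [σ', hik]
      obtain rfl | hjk := eq_or_ne j k
      · simpa [σ', hji] using add_nonneg (h.1.1 j) (h.1.1 i)
      · simpa [σ', hji, hjk] using h.1.1 j
    · simp [σ', Finset.sum_add_distrib, ← Finset.mul_sum, h.1.2]
  have hpay : σ' ⬝ᵥ u = σ ⬝ᵥ u + σ i * (u k - u i) := by
    rw [add_dotProduct, smul_dotProduct, sub_dotProduct, single_dotProduct, single_dotProduct,
      smul_eq_mul]
    ring
  have : σ i * (u k - u i) ≤ 0 := by linarith [h.2 σ' hσ']
  exact le_antisymm (nonpos_of_mul_nonpos_left this (sub_pos.2 hlt)) (h.1.1 i)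

theorem eq_single_of_mem_stdSimplex [DecidableEq ι] {σ : ι → ℝ} (hσ : σ ∈ stdSimplex ℝ ι) {i : ι}
    (h : ∀ j ≠ i, σ j = 0) : σ = Pi.single i 1 := by
  have hi : σ i = 1 := by rw [← hσ.2, Finset.sum_eq_single i (fun j _ => h j) (by simp)]
  ext j
  obtain rfl | hji := eq_or_ne j i
  · simpa using hi
  · simp [h j hji, hji]

end BestResponse

theorem pay3_eq_dotProduct_mulVec (M : Fin 3 → Fin 3 → ℝ) (σ τ : Fin 3 → ℝ) :
    pay3 M σ τ = σ ⬝ᵥ (of M *ᵥ τ) := by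
  simp only [pay3, dotProduct, mulVec, of_apply, Finset.mul_sum]
  exact Finset.sum_congr rfl fun i _ => Finset.sum_congr rfl fun j _ => by ring

theorem pay3_eq_dotProduct_vecMul (M : Fin 3 → Fin 3 → ℝ) (σ τ : Fin 3 → ℝ) :
    pay3 M σ τ = τ ⬝ᵥ (σ ᵥ* of M) := by
  rw [pay3_eq_dotProduct_mulVec, dotProduct_mulVec, dotProduct_comm]

theorem isMixed3_iff (σ : Fin 3 → ℝ) : IsMixed3 σ ↔ σ ∈ stdSimplex ℝ (Fin 3) := Iff.rfl

theorem isNashGhat_iff (σ τ : Fin 3 → ℝ) :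
    IsNashGhat σ τ ↔ IsBestResponse (of GhatA *ᵥ τ) σ ∧ IsBestResponse (σ ᵥ* of GhatB) τ := by
  simp only [IsNashGhat, IsBestResponse, isMixed3_iff, pay3_eq_dotProduct_mulVec GhatA,
    pay3_eq_dotProduct_vecMul GhatB]
  tauto

theorem ghatA_mulVec (τ : Fin 3 → ℝ) :
    of GhatA *ᵥ τ = ![3 * τ 0, 2 * τ 1 - 2 * τ 2, τ 0 + 4 * τ 1 - τ 2] := by
  ext i; fin_cases i <;> simp [GhatA, mulVec, dotProduct, Fin.sum_univ_three] <;> ring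

theorem vecMul_ghatB (σ : Fin 3 → ℝ) :
    σ ᵥ* of GhatB = ![2 * σ 0, 3 * σ 1 - 2 * σ 2, σ 0 + 4 * σ 1 - σ 2] := by
  ext j; fin_cases j <;> simp [GhatB, vecMul, dotProduct, Fin.sum_univ_three] <;> ring

theorem pure0_eq_single : pure0 = Pi.single 0 1 := by
  ext i; simp [pure0, Pi.single_apply]

theorem ghat_unique_equilibrium :
    IsNashGhat pure0 pure0 ∧
    ∀ σ τ : Fin 3 → ℝ, IsNashGhat σ τ → σ = pure0 ∧ τ = pure0 := by
  refine ⟨(isNashGhat_iff _ _).2 ⟨?_, ?_⟩, fun σ τ h => ?_⟩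
  · rw [pure0_eq_single]
    exact isBestResponse_single fun k => by fin_cases k <;> norm_num [GhatA]
  · rw [pure0_eq_single]
    exact isBestResponse_single fun k => by fin_cases k <;> norm_num [GhatB]
  obtain ⟨hσ, hτ⟩ := (isNashGhat_iff σ τ).1 h
  have hσs := hσ.1.2
  have hτs := hτ.1.2
  rw [Fin.sum_univ_three] at hσs hτs
  have hτ_nonneg := hτ.1.1
  have hσ₁ : σ 1 = 0 := hσ.apply_eq_zero_of_lt (i := 1) (k := 2) <| by
    simp only [ghatA_mulVec, Matrix.cons_val]; linarith [hτ_nonneg 1]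
  have hτ₁ : τ 1 = 0 := hτ.apply_eq_zero_of_lt (i := 1) (k := 2) <| by
    simp only [vecMul_ghatB, Matrix.cons_val]; linarith
  have hσ₂ : σ 2 = 0 := hσ.apply_eq_zero_of_lt (i := 2) (k := 0) <| by
    simp only [ghatA_mulVec, Matrix.cons_val]; linarith [hτ_nonneg 0]
  have hτ₂ : τ 2 = 0 := hτ.apply_eq_zero_of_lt (i := 2) (k := 0) <| by
    simp only [vecMul_ghatB, Matrix.cons_val]; linarith
  rw [pure0_eq_single]
  refine ⟨eq_single_of_mem_stdSimplex hσ.1 fun j hj => ?_,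
    eq_single_of_mem_stdSimplex hτ.1 fun j hj => ?_⟩
  · fin_cases j; exacts [absurd rfl hj, hσ₁, hσ₂]
  · fin_cases j; exacts [absurd rfl hj, hτ₁, hτ₂]
end

section
/- Let f be Nash's map for a finite game G, defined coordinatewise by f_{n,s_n}(σ) = (σ_{n,s_n} + φ_{n,s_n}(σ)) / (1 + Σ_{t_n} φ_{n,t_n}(σ)) where φ_{n,s_n}(σ) = max{0, G_n(s_n, σ_{-n}) − G_n(σ)}. Then σ is a fixed point of f if and only if σ is a Nash equilibrium of G. -/
open Finset

variable {N : ℕ} {S : Fin N → Type*} [∀ n, Fintype (S n)] [∀ n, DecidableEq (S n)]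

/-- The mixed-strategy profile `σ` lies in `Σ = Π_n Σ_n` (a product of simplices). -/
def InSimplex (σ : ∀ n, S n → ℝ) : Prop :=
  (∀ n s, 0 ≤ σ n s) ∧ ∀ n, ∑ s, σ n s = 1

/-- A pure strategy viewed as a mixed strategy (Dirac distribution). -/
noncomputable def pureStrat {n : Fin N} (a : S n) : S n → ℝ :=
  fun b => if b = a then 1 else 0

/-- Multilinear extension of the payoff `u n` of player `n` to mixed profiles. -/
noncomputable def expPay (u : ∀ _ : Fin N, (∀ m, S m) → ℝ)
    (σ : ∀ n, S n → ℝ) (n : Fin N) : ℝ :=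
  ∑ s : ∀ m, S m, (∏ m, σ m (s m)) * u n s

/-- `G_n(a, σ_{-n})`: player `n`'s payoff from the pure strategy `a` against `σ_{-n}`. -/
noncomputable def devPay (u : ∀ _ : Fin N, (∀ m, S m) → ℝ)
    (σ : ∀ n, S n → ℝ) (n : Fin N) (a : S n) : ℝ :=
  expPay u (Function.update σ n (pureStrat a)) n

/-- `σ` is a Nash equilibrium. -/
def IsNashEq (u : ∀ _ : Fin N, (∀ m, S m) → ℝ) (σ : ∀ n, S n → ℝ) : Prop :=
  InSimplex σ ∧ ∀ n (a : S n), devPay u σ n a ≤ expPay u σ n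

/-- `φ_{n,s_n}(σ) = max {0, G_n(s_n, σ_{-n}) − G_n(σ)}`. -/
noncomputable def phi (u : ∀ _ : Fin N, (∀ m, S m) → ℝ)
    (σ : ∀ n, S n → ℝ) (n : Fin N) (a : S n) : ℝ :=
  max 0 (devPay u σ n a - expPay u σ n)

/-- Nash's map `f`. -/
noncomputable def nashMap (u : ∀ _ : Fin N, (∀ m, S m) → ℝ)
    (σ : ∀ n, S n → ℝ) : ∀ n, S n → ℝ :=
  fun n a => (σ n a + phi u σ n a) / (1 + ∑ t, phi u σ n t)


lemma expPay_eq_sum (u : ∀ _ : Fin N, (∀ m, S m) → ℝ) (σ : ∀ n, S n → ℝ) (n : Fin N) :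
    expPay u σ n = ∑ a, σ n a * devPay u σ n a := by
  simp only [devPay, expPay, Finset.mul_sum]
  rw [Finset.sum_comm]
  apply Finset.sum_congr rfl
  intro s _
  have h : ∀ a : S n, ∏ m, (Function.update σ n (pureStrat a)) m (s m)
      = (if s n = a then 1 else 0) * ∏ m ∈ Finset.univ.erase n, σ m (s m) := by
    intro a
    rw [← Finset.mul_prod_erase _ _ (Finset.mem_univ n)]
    congr 1
    · simp [pureStrat]
    · exact Finset.prod_congr rfl fun m hm => by
        rw [Function.update_of_ne (Finset.mem_erase.mp hm).1]
  simp only [h]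
  rw [Finset.sum_eq_single (s n)]
  · rw [← Finset.mul_prod_erase Finset.univ (fun m => σ m (s m)) (Finset.mem_univ n)]
    simp; ring
  · intro b _ hb
    simp [Ne.symm hb]
  · simp

theorem nashMap_fixedPoint_iff_nashEq
    (u : ∀ _ : Fin N, (∀ m, S m) → ℝ) (σ : ∀ n, S n → ℝ) (hσ : InSimplex σ) :
    nashMap u σ = σ ↔ IsNashEq u σ := by
  obtain ⟨hnn, hsum⟩ := hσ
  constructor
  · intro hfix
    refine ⟨⟨hnn, hsum⟩, fun n a => ?_⟩
    -- there is some b with σ n b > 0 and devPay ≤ expPay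
    have hphi_nn : ∀ t : S n, 0 ≤ phi u σ n t := fun t => le_max_left _ _
    have hT : 0 ≤ ∑ t, phi u σ n t := Finset.sum_nonneg fun t _ => hphi_nn t
    have hex : ∃ b : S n, 0 < σ n b ∧ devPay u σ n b ≤ expPay u σ n := by
      by_contra hcon
      push_neg at hcon
      have hpos : ∃ b : S n, 0 < σ n b := by
        by_contra hc
        push_neg at hc
        have : ∑ s, σ n s = 0 := Finset.sum_eq_zero fun s _ =>
          le_antisymm (hc s) (hnn n s)
        rw [hsum n] at this; norm_num at this
      obtain ⟨b, hb⟩ := hpos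
      have hlt : ∑ a, σ n a * expPay u σ n < ∑ a, σ n a * devPay u σ n a := by
        apply Finset.sum_lt_sum
        · intro i _
          rcases lt_or_eq_of_le (hnn n i) with h | h
          · exact le_of_lt (by exact mul_lt_mul_of_pos_left (hcon i h) h)
          · simp [← h]
        · exact ⟨b, Finset.mem_univ b, mul_lt_mul_of_pos_left (hcon b hb) hb⟩
      rw [← Finset.sum_mul, hsum n, one_mul, ← expPay_eq_sum] at hlt
      exact lt_irrefl _ hlt
    obtain ⟨b, hbpos, hble⟩ := hex
    have hphib : phi u σ n b = 0 := by
      simp [phi, max_eq_left, sub_nonpos.mpr hble]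
    have hfb := congrFun (congrFun hfix n) b
    simp only [nashMap, hphib, add_zero] at hfb
    have hden : 1 + ∑ t, phi u σ n t ≠ 0 := by linarith
    have hTzero : ∑ t, phi u σ n t = 0 := by
      field_simp at hfb
      nlinarith [hfb]
    have hphia : phi u σ n a = 0 :=
      (Finset.sum_eq_zero_iff_of_nonneg fun t _ => hphi_nn t).mp hTzero a (Finset.mem_univ a)
    have := le_max_right 0 (devPay u σ n a - expPay u σ n)
    rw [← phi, hphia] at this
    linarith
  · intro ⟨_, hne⟩
    funext n a
    have hphi : ∀ t : S n, phi u σ n t = 0 := fun t => by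
      simp [phi, max_eq_left, sub_nonpos.mpr (hne n t)]
    simp [nashMap, hphi]
end

section
/- Let σ* be an isolated Nash equilibrium of a finite game G. Then there exists ε̄ > 0 such that for every Nash equilibrium σ ≠ σ* of G there exist two distinct players n₁, n₂ such that for each i = 1,2 there is a pure strategy s_{n_i} in the support of σ*_{n_i} with σ_{n_i}(s_{n_i}) < σ*_{n_i}(s_{n_i}) − ε̄. -/
open Finset

variable {N : ℕ} {S : Fin N → Type*} [∀ n, Fintype (S n)] [∀ n, DecidableEq (S n)]

/-!
Payoffs are multilinear, so along the segment between two equilibria that differ in a single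
player's strategy every deviation payoff and every equilibrium payoff is affine, and the whole
segment consists of equilibria. Hence an isolated equilibrium `σ*` differs from any other
equilibrium `σ` in at least two players, and since both are probability vectors, each of them
has a strategy `s` with `σ n s < σ* n s`. The equilibria at distance `≥ δ` from `σ*` form a
compact set on which, for each choice of two players and one strategy each, the smaller of the
two drops `σ* n s - σ n s` is continuous, and for some choice it is positive; compactness gives
a uniform positive lower bound.
-/

open Function

section Payoff

variable (u : ∀ _ : Fin N, (∀ m, S m) → ℝ)

noncomputable def expPayMultilinear (m : Fin N) : MultilinearMap ℝ (fun n => S n → ℝ) ℝ :=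
  ∑ s : ∀ n, S n, u m s •
    (MultilinearMap.mkPiAlgebra ℝ (Fin N) ℝ).compLinearMap fun n => LinearMap.proj (s n)

omit [∀ n, DecidableEq (S n)] in
theorem expPayMultilinear_apply (m : Fin N) (σ : ∀ n, S n → ℝ) :
    expPayMultilinear u m σ = expPay u σ m := by
  simp [expPayMultilinear, expPay, mul_comm]

omit [∀ n, DecidableEq (S n)] in
theorem continuous_expPay (m : Fin N) : Continuous fun σ : ∀ n, S n → ℝ => expPay u σ m := by
  unfold expPay; fun_prop

theorem continuous_devPay (m : Fin N) (a : S m) :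
    Continuous fun σ : ∀ n, S n → ℝ => devPay u σ m a :=
  (continuous_expPay u m).comp (continuous_id.update m continuous_const)

omit [∀ n, DecidableEq (S n)] in
theorem expPay_update_convexComb (σ : ∀ n, S n → ℝ) (n m : Fin N) (x y : S n → ℝ) (t : ℝ) :
    expPay u (update σ n ((1 - t) • x + t • y)) m
      = (1 - t) * expPay u (update σ n x) m + t * expPay u (update σ n y) m := by
  simp only [← expPayMultilinear_apply, MultilinearMap.map_update_add,
    MultilinearMap.map_update_smul, smul_eq_mul]

theorem devPay_update_convexComb (σ : ∀ n, S n → ℝ) (n m : Fin N) (x y : S n → ℝ) (t : ℝ)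
    (a : S m) :
    devPay u (update σ n ((1 - t) • x + t • y)) m a
      = (1 - t) * devPay u (update σ n x) m a + t * devPay u (update σ n y) m a := by
  unfold devPay
  obtain rfl | hmn := eq_or_ne m n
  · simp only [update_idem]; ring
  · simp only [update_comm hmn.symm]
    exact expPay_update_convexComb u _ n m x y t

end Payoff

omit [∀ n, DecidableEq (S n)] in
theorem setOf_inSimplex :
    {σ : ∀ n, S n → ℝ | InSimplex σ} = Set.univ.pi fun n => stdSimplex ℝ (S n) := by
  ext σ; simp [InSimplex, stdSimplex, forall_and]

omit [∀ n, DecidableEq (S n)] in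
theorem convex_setOf_inSimplex : Convex ℝ {σ : ∀ n, S n → ℝ | InSimplex σ} := by
  rw [setOf_inSimplex]
  exact convex_pi fun n _ => convex_stdSimplex ℝ (S n)

theorem isCompact_setOf_isNashEq (u : ∀ _ : Fin N, (∀ m, S m) → ℝ) :
    IsCompact {σ | IsNashEq u σ} := by
  have hclosed : IsClosed {σ | ∀ n (a : S n), devPay u σ n a ≤ expPay u σ n} := by
    simp only [Set.ofPred_forall]
    exact isClosed_iInter fun n => isClosed_iInter fun a =>
      isClosed_le (continuous_devPay u n a) (continuous_expPay u n)
  have hcompact : IsCompact {σ : ∀ n, S n → ℝ | InSimplex σ} := by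
    rw [setOf_inSimplex]
    exact isCompact_univ_pi fun n => isCompact_stdSimplex ℝ (S n)
  exact hcompact.inter_right hclosed

theorem IsNashEq.convexComb {u : ∀ _ : Fin N, (∀ m, S m) → ℝ} {σ τ : ∀ n, S n → ℝ}
    (hσ : IsNashEq u σ) (hτ : IsNashEq u τ) {n : Fin N} (hστ : ∀ m ≠ n, σ m = τ m) {t : ℝ}
    (ht₀ : 0 ≤ t) (ht₁ : t ≤ 1) : IsNashEq u ((1 - t) • σ + t • τ) := by
  have hτ_eq : update σ n (τ n) = τ := by
    ext1 m
    obtain rfl | hm := eq_or_ne m n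
    · exact update_self ..
    · rw [update_of_ne hm, hστ m hm]
  have hcomb : (1 - t) • σ + t • τ = update σ n ((1 - t) • σ n + t • τ n) := by
    ext1 m
    obtain rfl | hm := eq_or_ne m n
    · rw [update_self]; rfl
    · rw [update_of_ne hm, Pi.add_apply, Pi.smul_apply, Pi.smul_apply, ← hστ m hm, ← add_smul,
        sub_add_cancel, one_smul]
  refine ⟨convex_setOf_inSimplex hσ.1 hτ.1 (by linarith) ht₀ (by ring), fun m a => ?_⟩
  rw [hcomb, devPay_update_convexComb, expPay_update_convexComb, update_eq_self, hτ_eq]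
  exact add_le_add (mul_le_mul_of_nonneg_left (hσ.2 m a) (by linarith))
    (mul_le_mul_of_nonneg_left (hτ.2 m a) ht₀)

theorem IsNashEq.exists_ne_ne_of_isolated {u : ∀ _ : Fin N, (∀ m, S m) → ℝ}
    {σstar σ : ∀ n, S n → ℝ} (hNash : IsNashEq u σstar) {δ : ℝ} (hδ : 0 < δ)
    (hiso : ∀ σ, IsNashEq u σ → dist σ σstar < δ → σ = σstar) (hσ : IsNashEq u σ)
    (hne : σ ≠ σstar) : ∃ n₁ n₂, n₁ ≠ n₂ ∧ σ n₁ ≠ σstar n₁ ∧ σ n₂ ≠ σstar n₂ := by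
  obtain ⟨n, hn⟩ := ne_iff.mp hne
  by_contra! hcon
  have hagree : ∀ m ≠ n, σstar m = σ m := fun m hm => (hcon n m hm.symm hn).symm
  have hd : 0 < dist σstar σ := dist_pos.mpr hne.symm
  obtain ⟨c, hc, hcd⟩ := exists_pos_mul_lt hδ (dist σstar σ)
  set t := min c 1
  have ht : 0 < t := lt_min hc one_pos
  have hdist : dist (AffineMap.lineMap σstar σ t) σstar = t * dist σstar σ := by
    rw [dist_lineMap_left, Real.norm_of_nonneg ht.le]
  have hNash_t : IsNashEq u (AffineMap.lineMap σstar σ t) := by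
    rw [AffineMap.lineMap_apply_module]
    exact hNash.convexComb hσ hagree ht.le (min_le_right c 1)
  have hclose : dist (AffineMap.lineMap σstar σ t) σstar < δ := by
    rw [hdist]
    calc t * dist σstar σ ≤ dist σstar σ * c := by
          rw [mul_comm]; exact mul_le_mul_of_nonneg_left (min_le_left c 1) hd.le
      _ < δ := hcd
  have := hiso _ hNash_t hclose
  rw [this, dist_self] at hdist
  exact (mul_pos ht hd).ne hdist

theorem exists_lt_of_sum_eq_of_ne {ι M : Type*} [Fintype ι] [AddCommMonoid M] [LinearOrder M]
    [IsOrderedCancelAddMonoid M] {x y : ι → M} (hsum : ∑ i, x i = ∑ i, y i) (hne : x ≠ y) :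
    ∃ i, x i < y i := by
  by_contra! h
  exact hne (funext fun i =>
    ((Finset.sum_eq_sum_iff_of_le fun i _ => h i).mp hsum.symm i (mem_univ i)).symm)

theorem IsCompact.exists_pos_forall_exists_lt {X ι : Type*} [TopologicalSpace X] [Finite ι]
    {K : Set X} (hK : IsCompact K) {f : ι → X → ℝ} (hf : ∀ i, Continuous (f i))
    (hpos : ∀ x ∈ K, ∃ i, 0 < f i x) : ∃ ε > 0, ∀ x ∈ K, ∃ i, ε < f i x := by
  cases isEmpty_or_nonempty ι
  · exact ⟨1, one_pos, fun x hx => (hpos x hx).elim fun i => isEmptyElim i⟩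
  have := Fintype.ofFinite ι
  obtain ⟨ε, hε, hεK⟩ := hK.exists_forall_le' (f := fun x => univ.sup' univ_nonempty (f · x))
    (Continuous.finset_sup'_apply _ fun i _ => hf i).continuousOn
    (fun x hx => by simpa only [lt_sup'_iff, mem_univ, true_and] using hpos x hx)
  refine ⟨ε / 2, half_pos hε, fun x hx => ?_⟩
  simpa only [lt_sup'_iff, mem_univ, true_and] using (half_lt_self hε).trans_le (hεK x hx)

theorem isolated_equilibrium_two_players_deviate
    (u : ∀ _ : Fin N, (∀ m, S m) → ℝ) (σstar : ∀ n, S n → ℝ)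
    (hNash : IsNashEq u σstar)
    (hiso : ∃ δ > 0, ∀ σ, IsNashEq u σ → dist σ σstar < δ → σ = σstar) :
    ∃ ε > 0, ∀ σ, IsNashEq u σ → σ ≠ σstar →
      ∃ n₁ n₂ : Fin N, n₁ ≠ n₂ ∧
        (∃ s : S n₁, 0 < σstar n₁ s ∧ σ n₁ s < σstar n₁ s - ε) ∧
        (∃ s : S n₂, 0 < σstar n₂ s ∧ σ n₂ s < σstar n₂ s - ε) := by
  obtain ⟨δ, hδ, hiso⟩ := hiso
  set K := {σ | IsNashEq u σ ∧ δ ≤ dist σ σstar}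
  have hK : IsCompact K := (isCompact_setOf_isNashEq u).inter_right
    (isClosed_le continuous_const (continuous_id.dist continuous_const))
  let drop (p : {p : (Σ n, S n) × (Σ n, S n) // p.1.1 ≠ p.2.1}) (σ : ∀ n, S n → ℝ) : ℝ :=
    min (σstar p.1.1.1 p.1.1.2 - σ p.1.1.1 p.1.1.2) (σstar p.1.2.1 p.1.2.2 - σ p.1.2.1 p.1.2.2)
  obtain ⟨ε, hε, hKε⟩ := hK.exists_pos_forall_exists_lt (f := drop) (fun p => by fun_prop) <| by
    rintro σ ⟨hσ, hσδ⟩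
    obtain ⟨n₁, n₂, hn, h₁, h₂⟩ :=
      hNash.exists_ne_ne_of_isolated hδ hiso hσ (dist_pos.mp (hδ.trans_le hσδ))
    obtain ⟨s₁, hs₁⟩ := exists_lt_of_sum_eq_of_ne (by rw [hσ.1.2, hNash.1.2]) h₁
    obtain ⟨s₂, hs₂⟩ := exists_lt_of_sum_eq_of_ne (by rw [hσ.1.2, hNash.1.2]) h₂
    exact ⟨⟨(⟨n₁, s₁⟩, ⟨n₂, s₂⟩), hn⟩, lt_min (sub_pos.2 hs₁) (sub_pos.2 hs₂)⟩
  refine ⟨ε, hε, fun σ hσ hne => ?_⟩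
  obtain ⟨⟨⟨⟨n₁, s₁⟩, ⟨n₂, s₂⟩⟩, hn⟩, hdrop⟩ :=
    hKε σ ⟨hσ, not_lt.mp fun h => hne (hiso σ hσ h)⟩
  obtain ⟨h₁, h₂⟩ := lt_min_iff.mp hdrop
  exact ⟨n₁, n₂, hn, ⟨s₁, by linarith [hσ.1.1 n₁ s₁], by linarith⟩,
    ⟨s₂, by linarith [hσ.1.1 n₂ s₂], by linarith⟩⟩
end

section
/- Let G be a finite game and let σ, σ* be Nash equilibria of G that differ only in player n's strategy (σ_m = σ*_m for all m ≠ n). Then for every λ ∈ [0,1], the profile (λσ_n + (1−λ)σ*_n, σ_{-n}) is also a Nash equilibrium of G. -/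
open Finset

variable {N : ℕ} {S : Fin N → Type*} [∀ n, Fintype (S n)] [∀ n, DecidableEq (S n)]

lemma prod_update_eq (σ : ∀ n, S n → ℝ) (n : Fin N) (f : S n → ℝ) (s : ∀ m, S m) :
    (∏ m, Function.update σ n f m (s m)) = f (s n) * ∏ m ∈ Finset.univ.erase n, σ m (s m) := by
  rw [← Finset.mul_prod_erase _ _ (Finset.mem_univ n)]
  congr 1
  · simp
  · exact Finset.prod_congr rfl fun m hm => by
      rw [Function.update_of_ne (Finset.mem_erase.1 hm).1]

lemma expPay_update_affine (u : ∀ _ : Fin N, (∀ m, S m) → ℝ) (σ : ∀ n, S n → ℝ)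
    (n k : Fin N) (c d : ℝ) (x y : S n → ℝ) :
    expPay u (Function.update σ n (fun a => c * x a + d * y a)) k
      = c * expPay u (Function.update σ n x) k + d * expPay u (Function.update σ n y) k := by
  unfold expPay
  rw [Finset.mul_sum, Finset.mul_sum, ← Finset.sum_add_distrib]
  refine Finset.sum_congr rfl fun s _ => ?_
  rw [prod_update_eq, prod_update_eq, prod_update_eq]
  ring

theorem segment_of_equilibria_differing_in_one_player
    (u : ∀ _ : Fin N, (∀ m, S m) → ℝ) (σ σstar : ∀ n, S n → ℝ)
    (hσ : IsNashEq u σ) (hσstar : IsNashEq u σstar)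
    (n : Fin N) (hsame : ∀ m, m ≠ n → σ m = σstar m) :
    ∀ l ∈ Set.Icc (0 : ℝ) 1,
      IsNashEq u (Function.update σ n (fun a => l * σ n a + (1 - l) * σstar n a)) := by
  intro l hl
  obtain ⟨hl0, hl1⟩ := hl
  have hl1' : (0:ℝ) ≤ 1 - l := by linarith
  obtain ⟨⟨hσpos, hσsum⟩, hσbest⟩ := hσ
  obtain ⟨⟨hσspos, hσssum⟩, hσsbest⟩ := hσstar
  have hstar : σstar = Function.update σ n (σstar n) := by
    funext m
    by_cases hm : m = n
    · subst hm; simp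
    · rw [Function.update_of_ne hm, hsame m hm]
  set τ := Function.update σ n (fun a => l * σ n a + (1 - l) * σstar n a) with hτ
  have hEτ : ∀ k, expPay u τ k = l * expPay u σ k + (1 - l) * expPay u σstar k := by
    intro k
    rw [hτ, expPay_update_affine, Function.update_eq_self, ← hstar]
  refine ⟨⟨?_, ?_⟩, ?_⟩
  · intro m s
    by_cases hm : m = n
    · subst hm
      simp only [τ, Function.update_self]
      have := hσpos m s; have := hσspos m s
      positivity
    · rw [hτ, Function.update_of_ne hm]; exact hσpos m s
  · intro m
    by_cases hm : m = n
    · subst hm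
      simp only [τ, Function.update_self]
      rw [Finset.sum_add_distrib, ← Finset.mul_sum, ← Finset.mul_sum, hσsum, hσssum]
      ring
    · rw [hτ, Function.update_of_ne hm]; exact hσsum m
  · intro m a
    rw [hEτ m]
    by_cases hm : m = n
    · subst hm
      have hdev : devPay u τ m a = devPay u σ m a := by
        unfold devPay
        rw [hτ, Function.update_idem]
      have hdevs : devPay u σstar m a = devPay u σ m a := by
        unfold devPay
        rw [hstar, Function.update_idem]
      rw [hdev]
      have h1 := hσbest m a
      have h2 := hσsbest m a
      rw [hdevs] at h2
      nlinarith
    · have hdev : devPay u τ m a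
          = l * devPay u σ m a + (1 - l) * devPay u σstar m a := by
        unfold devPay
        rw [hτ, Function.update_comm (Ne.symm hm), expPay_update_affine,
          Function.update_comm hm, Function.update_eq_self,
          Function.update_comm hm, ← hstar]
      rw [hdev]
      have h1 := hσbest m a
      have h2 := hσsbest m a
      nlinarith
end

section
/- The three-player game \bar G with strategy sets {T,B} × {L,R} × {W,E} and payoffs W: (T,L)=(1,1,1), (T,R)=(1,1,0), (B,L)=(1,0,1), (B,R)=(0,1,1); E: (T,L)=(0,1,1), (T,R)=(1,0,1), (B,L)=(1,0,0), (B,R)=(0,1,0), has (T,L,W) as its unique Nash equilibrium in mixed strategies, and this equilibrium is not quasi-strict (some unused pure strategy is a best reply to it). -/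
open Finset

/-- Payoff of player 1 in the game `Ḡ`; indices: player 1's strategy (`T = 0`, `B = 1`),
player 2's (`L = 0`, `R = 1`), player 3's (`W = 0`, `E = 1`). -/
noncomputable def Q1 : Fin 2 → Fin 2 → Fin 2 → ℝ :=
  ![![![1, 0], ![1, 1]], ![![1, 1], ![0, 0]]]

/-- Payoff of player 2. -/
noncomputable def Q2 : Fin 2 → Fin 2 → Fin 2 → ℝ :=
  ![![![1, 1], ![1, 0]], ![![0, 0], ![1, 1]]]

/-- Payoff of player 3. -/
noncomputable def Q3 : Fin 2 → Fin 2 → Fin 2 → ℝ :=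
  ![![![1, 1], ![0, 1]], ![![1, 0], ![1, 0]]]

/-- A mixed strategy over two pure strategies. -/
def IsMixed2 (σ : Fin 2 → ℝ) : Prop := (∀ i, 0 ≤ σ i) ∧ ∑ i, σ i = 1

/-- Expected payoff under a mixed profile. -/
noncomputable def EP (P : Fin 2 → Fin 2 → Fin 2 → ℝ) (σ1 σ2 σ3 : Fin 2 → ℝ) : ℝ :=
  ∑ a, ∑ b, ∑ c, σ1 a * σ2 b * σ3 c * P a b c

/-- A pure strategy as a mixed strategy. -/
noncomputable def pure2 (a : Fin 2) : Fin 2 → ℝ := fun i => if i = a then 1 else 0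

/-- `(σ1, σ2, σ3)` is a (mixed) Nash equilibrium of `Ḡ`. -/
def IsNashGbar (σ1 σ2 σ3 : Fin 2 → ℝ) : Prop :=
  IsMixed2 σ1 ∧ IsMixed2 σ2 ∧ IsMixed2 σ3 ∧
  (∀ a, EP Q1 (pure2 a) σ2 σ3 ≤ EP Q1 σ1 σ2 σ3) ∧
  (∀ b, EP Q2 σ1 (pure2 b) σ3 ≤ EP Q2 σ1 σ2 σ3) ∧
  (∀ c, EP Q3 σ1 σ2 (pure2 c) ≤ EP Q3 σ1 σ2 σ3)

lemma key (p q r : ℝ) (hp0 : 0 ≤ p) (hp1 : p ≤ 1) (hq0 : 0 ≤ q) (hq1 : q ≤ 1)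
    (hr0 : 0 ≤ r) (hr1 : r ≤ 1)
    (h1 : (1 - p) * (q * r + 1 - 2 * q) ≤ 0) (h2 : 0 ≤ p * (q * r + 1 - 2 * q))
    (h3 : (1 - q) * (2 * p - p * r - 1) ≤ 0) (h4 : 0 ≤ q * (2 * p - p * r - 1))
    (h5 : (1 - r) * (p * q + 1 - 2 * p) ≤ 0) (h6 : 0 ≤ r * (p * q + 1 - 2 * p)) :
    p = 1 ∧ q = 1 ∧ r = 1 := by
  by_cases hp : p = 1
  · subst hp
    by_cases hq : q = 1
    · subst hq
      refine ⟨rfl, rfl, ?_⟩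
      nlinarith
    · have hq' : q < 1 := lt_of_le_of_ne hq1 hq
      have hr : r = 1 := by nlinarith
      subst hr
      nlinarith
  · exfalso
    have hp' : p < 1 := lt_of_le_of_ne hp1 hp
    -- A ≤ 0
    have hA : q * r + 1 - 2 * q ≤ 0 := by nlinarith
    have hqpos : (0:ℝ) < q := by nlinarith
    have hB : 0 ≤ 2 * p - p * r - 1 := by nlinarith
    have hppos : (0:ℝ) < p := by nlinarith
    have hA0 : q * r + 1 - 2 * q = 0 := by nlinarith
    by_cases hq : q = 1
    · subst hq
      have hr : r = 1 := by nlinarith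
      nlinarith
    · have hq' : q < 1 := lt_of_le_of_ne hq1 hq
      have hB0 : 2 * p - p * r - 1 = 0 := by nlinarith
      have hpq : p = q := by
        have hz : (p - q) * (2 - r) = 0 := by linear_combination hB0 + hA0
        rcases mul_eq_zero.1 hz with h | h
        · linarith
        · linarith
      have heq : p * q + 1 - 2 * p = (p - 1) ^ 2 := by rw [← hpq]; ring
      have hne : p - 1 ≠ 0 := fun h => hp (by linarith)
      have hC : 0 < p * q + 1 - 2 * p := by
        rw [heq]; positivity
      have hr : r = 1 := by
        by_contra h
        have hr' : r < 1 := lt_of_le_of_ne hr1 h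
        have : 0 < (1 - r) * (p * q + 1 - 2 * p) := mul_pos (by linarith) hC
        linarith
      subst hr
      nlinarith

theorem gbar_unique_equilibrium_not_quasistrict :
    -- (T, L, W) is a Nash equilibrium
    IsNashGbar (pure2 0) (pure2 0) (pure2 0) ∧
    -- and it is the unique Nash equilibrium in mixed strategies
    (∀ σ1 σ2 σ3, IsNashGbar σ1 σ2 σ3 →
      σ1 = pure2 0 ∧ σ2 = pure2 0 ∧ σ3 = pure2 0) ∧
    -- but it is not quasi-strict: some unused pure strategy is a best reply to it
    ((EP Q1 (pure2 1) (pure2 0) (pure2 0) = EP Q1 (pure2 0) (pure2 0) (pure2 0)) ∨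
     (EP Q2 (pure2 0) (pure2 1) (pure2 0) = EP Q2 (pure2 0) (pure2 0) (pure2 0)) ∨
     (EP Q3 (pure2 0) (pure2 0) (pure2 1) = EP Q3 (pure2 0) (pure2 0) (pure2 0))) := by
  refine ⟨?_, ?_, ?_⟩
  · refine ⟨⟨?_, ?_⟩, ⟨?_, ?_⟩, ⟨?_, ?_⟩, ?_, ?_, ?_⟩ <;>
      ( first
        | (intro i; fin_cases i <;> norm_num [EP, Q1, Q2, Q3, pure2, Fin.sum_univ_two])
        | norm_num [EP, Q1, Q2, Q3, pure2, Fin.sum_univ_two] )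
  · rintro σ1 σ2 σ3 ⟨⟨hpos1, hsum1⟩, ⟨hpos2, hsum2⟩, ⟨hpos3, hsum3⟩, hN1, hN2, hN3⟩
    rw [Fin.sum_univ_two] at hsum1 hsum2 hsum3
    have e1 : σ1 1 = 1 - σ1 0 := by linarith
    have e2 : σ2 1 = 1 - σ2 0 := by linarith
    have e3 : σ3 1 = 1 - σ3 0 := by linarith
    have ha0 := hN1 0
    have ha1 := hN1 1
    have hb0 := hN2 0
    have hb1 := hN2 1
    have hc0 := hN3 0
    have hc1 := hN3 1
    simp only [EP, Q1, Q2, Q3, pure2, Fin.sum_univ_two] at ha0 ha1 hb0 hb1 hc0 hc1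
    norm_num [e1, e2, e3] at ha0 ha1 hb0 hb1 hc0 hc1
    obtain ⟨hp, hq, hr⟩ := key (σ1 0) (σ2 0) (σ3 0) (hpos1 0) (by linarith [hpos1 1])
      (hpos2 0) (by linarith [hpos2 1]) (hpos3 0) (by linarith [hpos3 1])
      (by nlinarith) (by nlinarith) (by nlinarith) (by nlinarith) (by nlinarith) (by nlinarith)
    refine ⟨funext fun i => ?_, funext fun i => ?_, funext fun i => ?_⟩ <;>
      fin_cases i <;> simp [pure2, hp, hq, hr, e1, e2, e3]
  · left
    norm_num [EP, Q1, pure2, Fin.sum_univ_two]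
end
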